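/- arXiv:1912.13512 — 6 statements merged into one kernel-verified Lean document; each statement's English description precedes it below -/
import Mathlib

section
/- Let Ĝ be the graph K̂_{3,4}, obtained from the complete bipartite graph K_{3,4} by adding all three edges among the vertices of its part of size 3 (so the 3-side spans a triangle). Then every proper edge-colouring of Ĝ admits a rainbow copy of K_4. -/
/-- every proper edge-colouring of `K̂_{3,4}` (the complete bipartite
graph `K_{3,4}` plus a triangle on the 3-side, i.e. all pairs adjacent except pairs
within the 4-side) admits a rainbow copy of `K₄`. -/
theorem stmt_6 (C : Type) (G : SimpleGraph (Fin 3 ⊕ Fin 4))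
    (hG : ∀ u v, G.Adj u v ↔
      (u ≠ v ∧ ¬ ∃ b b' : Fin 4, u = Sum.inr b ∧ v = Sum.inr b'))
    (ψ : Sym2 (Fin 3 ⊕ Fin 4) → C)
    (hproper : ∀ a b c, G.Adj a b → G.Adj a c → b ≠ c → ψ s(a, b) ≠ ψ s(a, c)) :
    ∃ w x y z : Fin 3 ⊕ Fin 4,
      G.Adj w x ∧ G.Adj w y ∧ G.Adj w z ∧ G.Adj x y ∧ G.Adj x z ∧ G.Adj y z ∧
      ([ψ s(w, x), ψ s(w, y), ψ s(w, z), ψ s(x, y), ψ s(x, z), ψ s(y, z)]).Nodup := by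
  classical
  set X : Fin 3 → Fin 3 ⊕ Fin 4 := Sum.inl with hX
  set Y : Fin 4 → Fin 3 ⊕ Fin 4 := Sum.inr with hY
  have hXY : ∀ i j, G.Adj (X i) (Y j) := by
    intro i j
    rw [hG]
    refine ⟨by simp [hX, hY], ?_⟩
    rintro ⟨b, b', hb, _⟩
    simp [hX] at hb
  have hYX : ∀ i j, G.Adj (Y j) (X i) := fun i j => (hXY i j).symm
  have hXX : ∀ i i', i ≠ i' → G.Adj (X i) (X i') := by
    intro i i' h
    rw [hG]
    refine ⟨by simp [hX, h], ?_⟩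
    rintro ⟨b, b', hb, _⟩
    simp [hX] at hb
  -- the "opposite" triangle edge colour
  let c : Fin 3 → C := fun i =>
    if i = 0 then ψ s(X 1, X 2) else if i = 1 then ψ s(X 0, X 2) else ψ s(X 0, X 1)
  -- find a good j
  have hgood : ∃ j : Fin 4, ∀ i : Fin 3, ψ s(X i, Y j) ≠ c i := by
    by_contra h
    push_neg at h
    choose f hf using h
    have : ¬ Function.Injective f := by
      intro hinj
      have := Fintype.card_le_of_injective f hinj
      simp at this
    rw [Function.not_injective_iff] at this
    obtain ⟨j, j', hcol, hjj⟩ := this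
    exact hproper (X (f j)) (Y j) (Y j') (hXY _ _) (hXY _ _)
      (by simp [hY, hjj]) (by rw [hf j, hcol, ← hf j'])
  obtain ⟨j, hj⟩ := hgood
  have h0 := hj 0
  have h1 := hj 1
  have h2 := hj 2
  simp only [c] at h0 h1 h2
  norm_num at h0 h1 h2
  refine ⟨X 0, X 1, X 2, Y j, hXX 0 1 (by decide), hXX 0 2 (by decide), hXY 0 j,
    hXX 1 2 (by decide), hXY 1 j, hXY 2 j, ?_⟩
  have swap : ∀ a b : Fin 3 ⊕ Fin 4, ψ s(a, b) = ψ s(b, a) := by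
    intro a b; rw [Sym2.eq_swap]
  simp only [List.nodup_cons, List.mem_cons, List.not_mem_nil, or_false, List.mem_singleton,
    List.nodup_nil, and_true, not_or]
  refine ⟨⟨?_, ?_, ?_, ?_, ?_⟩, ⟨?_, ?_, ?_, ?_⟩, ⟨?_, ?_, ?_⟩, ⟨?_, ?_⟩, ?_⟩
  · exact hproper (X 0) (X 1) (X 2) (hXX 0 1 (by decide)) (hXX 0 2 (by decide)) (by simp [hX])
  · exact hproper (X 0) (X 1) (Y j) (hXX 0 1 (by decide)) (hXY 0 j) (by simp [hX, hY])
  · rw [swap (X 0) (X 1)]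
    exact hproper (X 1) (X 0) (X 2) (hXX 1 0 (by decide)) (hXX 1 2 (by decide)) (by simp [hX])
  · rw [swap (X 0) (X 1)]
    exact hproper (X 1) (X 0) (Y j) (hXX 1 0 (by decide)) (hXY 1 j) (by simp [hX, hY])
  · exact fun h => h2 h.symm
  · exact hproper (X 0) (X 2) (Y j) (hXX 0 2 (by decide)) (hXY 0 j) (by simp [hX, hY])
  · rw [swap (X 0) (X 2), swap (X 1) (X 2)]
    exact hproper (X 2) (X 0) (X 1) (hXX 2 0 (by decide)) (hXX 2 1 (by decide)) (by simp [hX])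
  · exact fun h => h1 h.symm
  · rw [swap (X 0) (X 2)]
    exact hproper (X 2) (X 0) (Y j) (hXX 2 0 (by decide)) (hXY 2 j) (by simp [hX, hY])
  · exact h0
  · rw [swap (X 0) (Y j), swap (X 1) (Y j)]
    exact hproper (Y j) (X 0) (X 1) (hYX 0 j) (hYX 1 j) (by simp [hX])
  · rw [swap (X 0) (Y j), swap (X 2) (Y j)]
    exact hproper (Y j) (X 0) (X 2) (hYX 0 j) (hYX 2 j) (by simp [hX])
  · exact hproper (X 1) (X 2) (Y j) (hXX 1 2 (by decide)) (hXY 1 j) (by simp [hX, hY])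
  · rw [swap (X 1) (X 2)]
    exact hproper (X 2) (X 1) (Y j) (hXX 2 1 (by decide)) (hXY 2 j) (by simp [hX, hY])
  · refine ⟨?_, not_false⟩
    rw [swap (X 1) (Y j), swap (X 2) (Y j)]
    exact hproper (Y j) (X 1) (X 2) (hYX 1 j) (hYX 2 j) (by simp [hX])
end

section
/- Let K^Δ_{1,25} be the graph obtained from the star K_{1,25} by attaching 49 triangles to each of its edges, where for each triangle the vertex outside K_{1,25} is new and distinct for every triangle. Then for any 24 matchings M_1, …, M_24 in K^Δ_{1,25}, the graph obtained by deleting all edges of M_1 ∪ ⋯ ∪ M_24 still contains a triangle. -/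
/-- Let `K^Δ_{1,25}` be the star `K_{1,25}` (centre `Sum.inl ()`, leaves
`Sum.inr (Sum.inl i)`) with 49 triangles attached to each star edge via distinct new
apex vertices `Sum.inr (Sum.inr (i, j))`. Deleting the edges of any 24 matchings
leaves a graph that still contains a triangle. -/
theorem stmt_8 (G : SimpleGraph (Unit ⊕ (Fin 25 ⊕ Fin 25 × Fin 49)))
    (hG : ∀ u v, G.Adj u v ↔
      ((∃ i : Fin 25,
          (u = Sum.inl () ∧ v = Sum.inr (Sum.inl i)) ∨
          (u = Sum.inr (Sum.inl i) ∧ v = Sum.inl ())) ∨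
       (∃ p : Fin 25 × Fin 49,
          (u = Sum.inl () ∧ v = Sum.inr (Sum.inr p)) ∨
          (u = Sum.inr (Sum.inr p) ∧ v = Sum.inl ())) ∨
       (∃ p : Fin 25 × Fin 49,
          (u = Sum.inr (Sum.inl p.1) ∧ v = Sum.inr (Sum.inr p)) ∨
          (u = Sum.inr (Sum.inr p) ∧ v = Sum.inr (Sum.inl p.1)))))
    (M : Fin 24 → SimpleGraph (Unit ⊕ (Fin 25 ⊕ Fin 25 × Fin 49)))
    (hMsub : ∀ i, M i ≤ G)
    (hmatch : ∀ i, ∀ v a b, (M i).Adj v a → (M i).Adj v b → a = b) :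
    ∃ u v w : Unit ⊕ (Fin 25 ⊕ Fin 25 × Fin 49),
      (G.Adj u v ∧ ∀ i, ¬ (M i).Adj u v) ∧
      (G.Adj v w ∧ ∀ i, ¬ (M i).Adj v w) ∧
      (G.Adj u w ∧ ∀ i, ¬ (M i).Adj u w) := by

  classical
  set c : Unit ⊕ (Fin 25 ⊕ Fin 25 × Fin 49) := Sum.inl () with hc
  -- Step 1: find a star edge (c, leaf l) not hit by any matching
  set S : Finset (Fin 25) :=
    Finset.univ.filter (fun l => ∃ i, (M i).Adj c (Sum.inr (Sum.inl l))) with hS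
  have hScard : S.card ≤ 24 := by
    have h := Finset.card_le_card_of_injOn
      (f := fun l : Fin 25 =>
        if h : ∃ i, (M i).Adj c (Sum.inr (Sum.inl l)) then h.choose else (0 : Fin 24))
      (s := S) (t := (Finset.univ : Finset (Fin 24)))
      (fun l _ => Finset.mem_univ _) ?_
    · simpa using h
    · intro a ha b hb hab
      simp only [hS, Finset.mem_coe, Finset.mem_filter, Finset.mem_univ, true_and] at ha hb
      simp only [dif_pos ha, dif_pos hb] at hab
      have h1 := ha.choose_spec
      have h2 := hb.choose_spec
      rw [hab] at h1
      have := hmatch _ _ _ _ h1 h2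
      simpa using this
  have hSne : Sᶜ.Nonempty := by
    rw [← Finset.card_pos, Finset.card_compl]
    simp only [Fintype.card_fin]
    omega
  obtain ⟨l, hl⟩ := hSne
  rw [Finset.mem_compl] at hl
  have hlfree : ∀ i, ¬ (M i).Adj c (Sum.inr (Sum.inl l)) := by
    intro i hi
    exact hl (by simp [hS]; exact ⟨i, hi⟩)
  -- Step 2: find an apex j such that neither triangle side is hit
  set B : Finset (Fin 49) :=
    Finset.univ.filter (fun j => ∃ i, (M i).Adj c (Sum.inr (Sum.inr (l, j))) ∨
      (M i).Adj (Sum.inr (Sum.inl l)) (Sum.inr (Sum.inr (l, j)))) with hB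
  have hBcard : B.card ≤ 48 := by
    have h := Finset.card_le_card_of_injOn
      (f := fun j : Fin 49 =>
        if h : ∃ i, (M i).Adj c (Sum.inr (Sum.inr (l, j))) ∨
            (M i).Adj (Sum.inr (Sum.inl l)) (Sum.inr (Sum.inr (l, j)))
        then (h.choose, decide ((M h.choose).Adj c (Sum.inr (Sum.inr (l, j)))))
        else ((0 : Fin 24), false))
      (s := B) (t := (Finset.univ : Finset (Fin 24 × Bool)))
      (fun j _ => Finset.mem_univ _) ?_
    · simpa using h
    · intro a ha b hb hab
      simp only [hB, Finset.mem_coe, Finset.mem_filter, Finset.mem_univ, true_and] at ha hb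
      simp only [dif_pos ha, dif_pos hb] at hab
      have h1 := ha.choose_spec
      have h2 := hb.choose_spec
      have hie : ha.choose = hb.choose := congrArg Prod.fst hab
      have hde := congrArg Prod.snd hab
      simp only [decide_eq_decide] at hde
      by_cases hca : (M ha.choose).Adj c (Sum.inr (Sum.inr (l, a)))
      · have hcb : (M hb.choose).Adj c (Sum.inr (Sum.inr (l, b))) := hde.mp hca
        rw [hie] at hca
        have := hmatch _ _ _ _ hca hcb
        simpa using this
      · have hcb : ¬ (M hb.choose).Adj c (Sum.inr (Sum.inr (l, b))) :=
          fun h' => hca (hde.mpr h')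
        have h1' := h1.resolve_left hca
        have h2' := h2.resolve_left hcb
        rw [hie] at h1'
        have := hmatch _ _ _ _ h1' h2'
        simpa using this
  have hBne : Bᶜ.Nonempty := by
    rw [← Finset.card_pos, Finset.card_compl]
    simp only [Fintype.card_fin]
    omega
  obtain ⟨j, hj⟩ := hBne
  rw [Finset.mem_compl] at hj
  have hjfree : ∀ i, ¬ (M i).Adj c (Sum.inr (Sum.inr (l, j))) ∧
      ¬ (M i).Adj (Sum.inr (Sum.inl l)) (Sum.inr (Sum.inr (l, j))) := by
    intro i
    constructor <;> intro h <;> exact hj (by simp [hB]; exact ⟨i, by tauto⟩)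
  refine ⟨c, Sum.inr (Sum.inl l), Sum.inr (Sum.inr (l, j)), ⟨?_, hlfree⟩,
    ⟨?_, fun i => (hjfree i).2⟩, ⟨?_, fun i => (hjfree i).1⟩⟩
  · rw [hG]; exact Or.inl ⟨l, Or.inl ⟨rfl, rfl⟩⟩
  · rw [hG]; exact Or.inr (Or.inr ⟨(l, j), Or.inl ⟨rfl, rfl⟩⟩)
  · rw [hG]; exact Or.inr (Or.inl ⟨(l, j), Or.inl ⟨rfl, rfl⟩⟩)
end

section
/- Let G be the graph on vertices x_1, x_2, x_3, y_1, …, y_5 whose edges are: all 15 edges between {x_1,x_2,x_3} and {y_1,…,y_5}, the three edges x_1x_2, x_1x_3, x_2x_3, and the four edges y_1y_2, y_1y_3, y_1y_4, y_1y_5. Let ψ be a proper edge-colouring of G such that the subgraph consisting of the triangle on {x_1,x_2,x_3} and all 15 cross edges is rainbow. Then G contains a rainbow copy of K_5 under ψ. -/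
/-!
The four star edges at `y₁` get four distinct colours, while the triangle uses only three, so
some star edge `y₁y` avoids all triangle colours. Then `x₁, x₂, x₃, y₁, y` span a rainbow `K₅`:
its nine edges meeting the triangle are rainbow by hypothesis, and `y₁y` differs from the six
cross edges at `y₁` and at `y` by properness.
-/

open Finset Sum

namespace SimpleGraph

variable {V C : Type*} {G : SimpleGraph V} {ψ : Sym2 V → C}

theorem exists_mem_colour_notMem_of_card_lt {v : V}
    (hproper : ∀ b c, G.Adj v b → G.Adj v c → b ≠ c → ψ s(v, b) ≠ ψ s(v, c))
    {s : Finset V} (hs : ∀ w ∈ s, G.Adj v w) {t : Finset C} (hst : t.card < s.card) :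
    ∃ w ∈ s, ψ s(v, w) ∉ t := by
  by_contra! h
  obtain ⟨b, hb, c, hc, hbc, hψ⟩ := Finset.exists_ne_map_eq_of_card_lt_of_maps_to hst h
  exact hproper b c (hs b hb) (hs c hc) hbc hψ

theorem nodup_colours_of_pairwise_adj_of_injOn {x₀ x₁ x₂ y z : V}
    (hproper : ∀ a b c, G.Adj a b → G.Adj a c → b ≠ c → ψ s(a, b) ≠ ψ s(a, c))
    (hinj : Set.InjOn ψ {e ∈ G.edgeSet | x₀ ∈ e ∨ x₁ ∈ e ∨ x₂ ∈ e})
    (hK : [x₀, x₁, x₂, y, z].Pairwise G.Adj)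
    (hfresh : ψ s(y, z) ∉ [ψ s(x₀, x₁), ψ s(x₀, x₂), ψ s(x₁, x₂)]) :
    [ψ s(x₀, x₁), ψ s(x₀, x₂), ψ s(x₀, y), ψ s(x₀, z), ψ s(x₁, x₂),
      ψ s(x₁, y), ψ s(x₁, z), ψ s(x₂, y), ψ s(x₂, z), ψ s(y, z)].Nodup := by
  have hne := hK.imp fun h => And.intro (G.ne_of_adj h) (G.ne_of_adj h.symm)
  simp only [List.pairwise_cons, List.mem_cons, List.not_mem_nil, or_false, forall_eq_or_imp,
    forall_eq, IsEmpty.forall_iff, implies_true, List.Pairwise.nil, and_self, and_true] at hK hne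
  obtain ⟨⟨h01, h02, h0y, h0z⟩, ⟨h12, h1y, h1z⟩, ⟨h2y, h2z⟩, hyz⟩ := hK
  set E := [s(x₀, x₁), s(x₀, x₂), s(x₀, y), s(x₀, z), s(x₁, x₂), s(x₁, y), s(x₁, z), s(x₂, y),
    s(x₂, z)] with hE
  have hE_nodup : E.Nodup := by simp [hE, hne]
  have hE_sub : ∀ e ∈ E, e ∈ {e ∈ G.edgeSet | x₀ ∈ e ∨ x₁ ∈ e ∨ x₂ ∈ e} := by
    simp [hE, h01, h02, h0y, h0z, h12, h1y, h1z, h2y, h2z]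
  have hyz_ne : ∀ x, G.Adj x y → G.Adj x z → ψ s(y, z) ≠ ψ s(x, y) ∧ ψ s(y, z) ≠ ψ s(x, z) :=
    fun x hxy hxz => ⟨by simpa [Sym2.eq_swap] using hproper y z x hyz hxy.symm hxz.ne',
      by simpa [Sym2.eq_swap] using hproper z y x hyz.symm hxz.symm hxy.ne'⟩
  have hstar : ψ s(y, z) ∉ E.map ψ := by
    simp only [List.mem_cons, List.not_mem_nil, or_false, not_or] at hfresh
    simp [hE, hfresh, hyz_ne x₀ h0y h0z, hyz_ne x₁ h1y h1z, hyz_ne x₂ h2y h2z]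
  change ((E.map ψ).concat (ψ s(y, z))).Nodup
  exact (List.nodup_concat _ _).2
    ⟨hstar, hE_nodup.map_on fun e he f hf => hinj (hE_sub e he) (hE_sub f hf)⟩

end SimpleGraph

/-- Let `G = K̃_{3,5}` be the graph on `x₁,x₂,x₃` (the `Fin 3` side) and
`y₁,…,y₅` (the `Fin 5` side, `y₁ = 0`) with all 15 cross edges, the triangle on the
3-side, and the star `y₁y₂, y₁y₃, y₁y₄, y₁y₅`. If `ψ` is a proper edge-colouring of
`G` under which the subgraph consisting of the triangle together with all 15 cross
edges is rainbow, then `G` contains a rainbow copy of `K₅` under `ψ`. -/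
theorem stmt_9 (C : Type) (G : SimpleGraph (Fin 3 ⊕ Fin 5))
    (hG : ∀ u v, G.Adj u v ↔
      ((∃ a b : Fin 3, a ≠ b ∧ u = Sum.inl a ∧ v = Sum.inl b) ∨
       (∃ (a : Fin 3) (b : Fin 5),
          (u = Sum.inl a ∧ v = Sum.inr b) ∨ (u = Sum.inr b ∧ v = Sum.inl a)) ∨
       (∃ b : Fin 5, b ≠ 0 ∧
          ((u = Sum.inr 0 ∧ v = Sum.inr b) ∨ (u = Sum.inr b ∧ v = Sum.inr 0)))))
    (ψ : Sym2 (Fin 3 ⊕ Fin 5) → C)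
    (hproper : ∀ a b c, G.Adj a b → G.Adj a c → b ≠ c → ψ s(a, b) ≠ ψ s(a, c))
    (hrainbow : ∀ e ∈ G.edgeSet, ∀ f ∈ G.edgeSet,
      (∀ b b' : Fin 5, e ≠ s(Sum.inr b, Sum.inr b')) →
      (∀ b b' : Fin 5, f ≠ s(Sum.inr b, Sum.inr b')) →
      ψ e = ψ f → e = f) :
    ∃ v0 v1 v2 v3 v4 : Fin 3 ⊕ Fin 5,
      G.Adj v0 v1 ∧ G.Adj v0 v2 ∧ G.Adj v0 v3 ∧ G.Adj v0 v4 ∧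
      G.Adj v1 v2 ∧ G.Adj v1 v3 ∧ G.Adj v1 v4 ∧
      G.Adj v2 v3 ∧ G.Adj v2 v4 ∧ G.Adj v3 v4 ∧
      ([ψ s(v0, v1), ψ s(v0, v2), ψ s(v0, v3), ψ s(v0, v4), ψ s(v1, v2),
        ψ s(v1, v3), ψ s(v1, v4), ψ s(v2, v3), ψ s(v2, v4), ψ s(v3, v4)]).Nodup := by
  classical
  have adj_inl : ∀ a w, w ≠ inl a → G.Adj (inl a) w := by
    rintro a (a' | c) h
    · exact (hG _ _).2 (Or.inl ⟨a, a', fun h' => h (h' ▸ rfl), rfl, rfl⟩)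
    · exact (hG _ _).2 (Or.inr (Or.inl ⟨a, c, Or.inl ⟨rfl, rfl⟩⟩))
  have adj_star : ∀ c ≠ 0, G.Adj (inr 0) (inr c) := fun c hc =>
    (hG _ _).2 (Or.inr (Or.inr ⟨c, hc, Or.inl ⟨rfl, rfl⟩⟩))
  have hinj : Set.InjOn ψ {e ∈ G.edgeSet | inl 0 ∈ e ∨ inl 1 ∈ e ∨ inl 2 ∈ e} := by
    rintro e ⟨he, hx⟩ f ⟨hf, hx'⟩
    refine hrainbow e he f hf ?_ ?_ <;> rintro b b' rfl <;> simp at hx hx'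
  obtain ⟨_, hw, hfresh⟩ := SimpleGraph.exists_mem_colour_notMem_of_card_lt (hproper (inr 0))
    (s := (univ.erase 0).map .inr) (by simpa using adj_star)
    (t := {ψ s(inl 0, inl 1), ψ s(inl 0, inl 2), ψ s(inl 1, inl 2)})
    (card_le_three.trans_lt (by simp))
  obtain ⟨b, hb, rfl⟩ := mem_map.1 hw
  have hyb := adj_star b (ne_of_mem_erase hb)
  have hK : [inl 0, inl 1, inl 2, inr 0, inr b].Pairwise G.Adj := by simp [adj_inl, hyb]
  refine ⟨inl 0, inl 1, inl 2, inr 0, inr b, ?_⟩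
  simpa [adj_inl, hyb] using
    SimpleGraph.nodup_colours_of_pairwise_adj_of_injOn hproper hinj hK (by simpa using hfresh)
end

section
/- Let n ≥ 1 and let B be the graph obtained from K_{3,n} (parts {x,y,z} and N with |N| = n) by adding the triangle on {x,y,z}. For every proper edge-colouring ψ of B under which the triangle xyz is rainbow, there exists a subset N_ψ ⊆ N with |N_ψ| ≥ (n − 3)/7 such that: (i) for every u ∈ N_ψ, none of the colours ψ(xu), ψ(yu), ψ(zu) appears on the triangle xyz, and (ii) for all distinct u, u' ∈ N_ψ, the colour sets {ψ(xu), ψ(yu), ψ(zu)} and {ψ(xu'), ψ(yu'), ψ(zu')} are disjoint. In particular, for every 5-subset X ⊆ N_ψ, the subgraph of B induced on {x,y,z} ∪ X is rainbow under ψ. -/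
lemma greedy_aux {α : Type*} [DecidableEq α] (R : α → α → Prop)
    [∀ u v, Decidable (R u v)]
    (hsymm : ∀ u v, R u v → R v u) (hirr : ∀ u, ¬ R u u) (k : ℕ)
    (T : Finset α)
    (hbound : ∀ u ∈ T, (T.filter (fun v => ¬ R u v)).card ≤ k) :
    ∃ S ⊆ T, (∀ u ∈ S, ∀ v ∈ S, u ≠ v → R u v) ∧ T.card ≤ k * S.card := by
  induction T using Finset.strongInduction with
  | _ T ih =>
    rcases T.eq_empty_or_nonempty with rfl | ⟨u, hu⟩
    · exact ⟨∅, Finset.Subset.refl _, by simp, by simp⟩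
    · set Bu := T.filter (fun v => ¬ R u v) with hBudef
      have huB : u ∈ Bu := Finset.mem_filter.mpr ⟨hu, hirr u⟩
      have hss : T \ Bu ⊂ T :=
        Finset.sdiff_ssubset (Finset.filter_subset _ _) ⟨u, huB⟩
      have hbound' : ∀ w ∈ T \ Bu, ((T \ Bu).filter (fun v => ¬ R w v)).card ≤ k := by
        intro w hw
        refine le_trans (Finset.card_le_card ?_) (hbound w (Finset.mem_sdiff.mp hw).1)
        exact Finset.filter_subset_filter _ Finset.sdiff_subset
      obtain ⟨S', hS'sub, hpair, hcard⟩ := ih (T \ Bu) hss hbound'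
      have huS' : u ∉ S' := fun h => (Finset.mem_sdiff.mp (hS'sub h)).2 huB
      have hRu : ∀ v ∈ S', R u v := by
        intro v hv
        have hv' := Finset.mem_sdiff.mp (hS'sub hv)
        by_contra hR
        exact hv'.2 (Finset.mem_filter.mpr ⟨hv'.1, hR⟩)
      refine ⟨insert u S', ?_, ?_, ?_⟩
      · intro v hv
        rcases Finset.mem_insert.mp hv with rfl | hv
        · exact hu
        · exact Finset.sdiff_subset (hS'sub hv)
      · intro v hv w hw hvw
        rcases Finset.mem_insert.mp hv with rfl | hv2
        · rcases Finset.mem_insert.mp hw with rfl | hw2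
          · exact absurd rfl hvw
          · exact hRu w hw2
        · rcases Finset.mem_insert.mp hw with rfl | hw2
          · exact hsymm _ _ (hRu v hv2)
          · exact hpair v hv2 w hw2 hvw
      · have h1 : (T \ Bu).card + Bu.card = T.card :=
          Finset.card_sdiff_add_card_eq_card (Finset.filter_subset _ _)
        have h2 : Bu.card ≤ k := hbound u hu
        rw [Finset.card_insert_of_notMem huS', Nat.mul_succ]
        omega

/-- Let `B` be `K_{3,n}` (parts `{x,y,z} = Fin 3` and `N = Fin n`) plus
the triangle on `{x,y,z}`. For every proper edge-colouring `ψ` of `B` under which the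
triangle is rainbow, there is `N_ψ ⊆ N` with `|N_ψ| ≥ (n-3)/7` such that (i) no colour
of a cross edge at a vertex of `N_ψ` appears on the triangle, (ii) colour sets of cross
edges at distinct vertices of `N_ψ` are disjoint; in particular for every 5-subset
`X ⊆ N_ψ` the subgraph induced on `{x,y,z} ∪ X` is rainbow. -/
theorem stmt_10 (n : ℕ) (hn : 1 ≤ n) (C : Type)
    (B : SimpleGraph (Fin 3 ⊕ Fin n))
    (hB : ∀ u v, B.Adj u v ↔
      ((∃ a b : Fin 3, a ≠ b ∧ u = Sum.inl a ∧ v = Sum.inl b) ∨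
       (∃ (a : Fin 3) (b : Fin n),
          (u = Sum.inl a ∧ v = Sum.inr b) ∨ (u = Sum.inr b ∧ v = Sum.inl a))))
    (ψ : Sym2 (Fin 3 ⊕ Fin n) → C)
    (hproper : ∀ a b c, B.Adj a b → B.Adj a c → b ≠ c → ψ s(a, b) ≠ ψ s(a, c))
    (htri : ∀ a b a' b' : Fin 3, a ≠ b → a' ≠ b' →
      ψ s(Sum.inl a, Sum.inl b) = ψ s(Sum.inl a', Sum.inl b') → s(a, b) = s(a', b')) :
    ∃ Nψ : Finset (Fin n),
      ((n : ℚ) - 3) / 7 ≤ (Nψ.card : ℚ) ∧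
      (∀ u ∈ Nψ, ∀ a b c : Fin 3, b ≠ c →
        ψ s(Sum.inl a, Sum.inr u) ≠ ψ s(Sum.inl b, Sum.inl c)) ∧
      (∀ u ∈ Nψ, ∀ u' ∈ Nψ, u ≠ u' → ∀ a a' : Fin 3,
        ψ s(Sum.inl a, Sum.inr u) ≠ ψ s(Sum.inl a', Sum.inr u')) ∧
      (∀ X : Finset (Fin n), X ⊆ Nψ → X.card = 5 →
        ∀ e ∈ B.edgeSet, ∀ f ∈ B.edgeSet,
          (∀ v, v ∈ e →
            v ∈ (Set.range (Sum.inl : Fin 3 → Fin 3 ⊕ Fin n) ∪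
                  Sum.inr '' (X : Set (Fin n)))) →
          (∀ v, v ∈ f →
            v ∈ (Set.range (Sum.inl : Fin 3 → Fin 3 ⊕ Fin n) ∪
                  Sum.inr '' (X : Set (Fin n)))) →
          ψ e = ψ f → e = f) := by
  classical
  have adjll : ∀ a b : Fin 3, a ≠ b → B.Adj (Sum.inl a) (Sum.inl b) :=
    fun a b h => (hB _ _).mpr (Or.inl ⟨a, b, h, rfl, rfl⟩)
  have adjlr : ∀ (a : Fin 3) (u : Fin n), B.Adj (Sum.inl a) (Sum.inr u) :=
    fun a u => (hB _ _).mpr (Or.inr ⟨a, u, Or.inl ⟨rfl, rfl⟩⟩)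
  have adjrl : ∀ (u : Fin n) (a : Fin 3), B.Adj (Sum.inr u) (Sum.inl a) :=
    fun u a => (adjlr a u).symm
  have hcross : ∀ (u v : Fin n) (a : Fin 3), u ≠ v →
      ψ s(Sum.inl a, Sum.inr u) ≠ ψ s(Sum.inl a, Sum.inr v) :=
    fun u v a h => hproper _ _ _ (adjlr a u) (adjlr a v) (by simp [h])
  have hkey : ∀ (u : Fin n) (a b c : Fin 3), b ≠ c →
      ψ s(Sum.inl a, Sum.inr u) = ψ s(Sum.inl b, Sum.inl c) → a ≠ b ∧ a ≠ c := by
    intro u a b c hbc h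
    constructor
    · rintro rfl
      exact hproper _ _ _ (adjlr a u) (adjll a c hbc) (by simp) h
    · rintro rfl
      exact hproper _ _ _ (adjlr a u) (adjll a b (Ne.symm hbc)) (by simp)
        (h.trans (congrArg ψ (Sym2.eq_swap)))
  set Good : Fin n → Prop := fun u => ∀ a b c : Fin 3, b ≠ c →
      ψ s(Sum.inl a, Sum.inr u) ≠ ψ s(Sum.inl b, Sum.inl c) with hGood
  set T : Finset (Fin n) := Finset.univ.filter Good with hT
  have hbad : (Finset.univ.filter (fun u => ¬ Good u)).card ≤ 3 := by
    have hthird : ∀ a a' b c b' c' : Fin 3, b ≠ c → s(b, c) = s(b', c') →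
        a ≠ b → a ≠ c → a' ≠ b' → a' ≠ c' → a = a' := by decide
    have h3 : ∀ b c : Fin 3, b ≠ c →
        s(b, c) = s((0 : Fin 3), (1 : Fin 3)) ∨ s(b, c) = s((0 : Fin 3), (2 : Fin 3)) ∨
        s(b, c) = s((1 : Fin 3), (2 : Fin 3)) := by decide
    set TC : Finset C := ({((0 : Fin 3), (1 : Fin 3)), ((0 : Fin 3), (2 : Fin 3)),
        ((1 : Fin 3), (2 : Fin 3))} : Finset (Fin 3 × Fin 3)).image
        (fun p => ψ s(Sum.inl p.1, Sum.inl p.2)) with hTCdef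
    have hTCcard : TC.card ≤ 3 := le_trans Finset.card_image_le (by decide)
    have hmap : ∀ x y : Fin 3,
        s(Sum.inl x, Sum.inl y) = Sym2.map (Sum.inl : Fin 3 → Fin 3 ⊕ Fin n) s(x, y) :=
      fun x y => (Sym2.map_pair_eq _ _ _).symm
    have htc : ∀ b c : Fin 3, b ≠ c → ψ s(Sum.inl b, Sum.inl c) ∈ TC := by
      intro b c hbc
      rcases h3 b c hbc with h | h | h
      · rw [hmap, h, ← hmap]
        exact Finset.mem_image.mpr ⟨((0 : Fin 3), (1 : Fin 3)), by simp, rfl⟩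
      · rw [hmap, h, ← hmap]
        exact Finset.mem_image.mpr ⟨((0 : Fin 3), (2 : Fin 3)), by simp, rfl⟩
      · rw [hmap, h, ← hmap]
        exact Finset.mem_image.mpr ⟨((1 : Fin 3), (2 : Fin 3)), by simp, rfl⟩
    set Bad : Fin n → Prop := fun u => ∃ a b c : Fin 3, b ≠ c ∧
        ψ s(Sum.inl a, Sum.inr u) = ψ s(Sum.inl b, Sum.inl c) with hBaddef
    have hbadiff : ∀ u, ¬ Good u → Bad u := by
      intro u hu
      simp only [hGood] at hu
      push_neg at hu
      obtain ⟨a, b, c, hbc, heq⟩ := hu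
      exact ⟨a, b, c, hbc, heq⟩
    set f : Fin n → C := fun u =>
      if h : Bad u then ψ s(Sum.inl h.choose, Sum.inr u) else ψ s(Sum.inl 0, Sum.inr u)
        with hfdef
    refine le_trans (Finset.card_le_card_of_injOn f ?_ ?_) hTCcard
    · intro u hu
      have hb : Bad u := hbadiff u (Finset.mem_filter.mp hu).2
      obtain ⟨b, c, hbc, heq⟩ := hb.choose_spec
      have hfu : f u = ψ s(Sum.inl b, Sum.inl c) := by
        rw [hfdef]; simp only [dif_pos hb]; exact heq
      rw [hfu]; exact htc b c hbc
    · intro u hu u' hu' hfu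
      by_contra hne
      have hb : Bad u := hbadiff u (Finset.mem_filter.mp (Finset.mem_coe.mp hu)).2
      have hb' : Bad u' := hbadiff u' (Finset.mem_filter.mp (Finset.mem_coe.mp hu')).2
      obtain ⟨b, c, hbc, heq⟩ := hb.choose_spec
      obtain ⟨b', c', hbc', heq'⟩ := hb'.choose_spec
      have e1 : f u = ψ s(Sum.inl b, Sum.inl c) := by
        rw [hfdef]; simp only [dif_pos hb]; exact heq
      have e2 : f u' = ψ s(Sum.inl b', Sum.inl c') := by
        rw [hfdef]; simp only [dif_pos hb']; exact heq'
      have hcc : ψ s(Sum.inl b, Sum.inl c) = ψ s(Sum.inl b', Sum.inl c') := by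
        rw [← e1, ← e2, hfu]
      have hs := htri b c b' c' hbc hbc' hcc
      have h1 := hkey u hb.choose b c hbc heq
      have h2 := hkey u' hb'.choose b' c' hbc' heq'
      have haa : hb.choose = hb'.choose := hthird _ _ _ _ _ _ hbc hs h1.1 h1.2 h2.1 h2.2
      have : ψ s(Sum.inl hb.choose, Sum.inr u) = ψ s(Sum.inl hb.choose, Sum.inr u') := by
        rw [heq, hcc, ← heq', haa]
      exact hcross u u' hb.choose hne this
  have hTn : n ≤ T.card + 3 := by
    have h2 := Finset.card_filter_add_card_filter_not
      (s := (Finset.univ : Finset (Fin n))) (p := Good)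
    have h3 : (Finset.univ : Finset (Fin n)).card = n := by simp
    rw [← hT] at h2
    omega
  set R : Fin n → Fin n → Prop := fun u v => ∀ a a' : Fin 3,
      ψ s(Sum.inl a, Sum.inr u) ≠ ψ s(Sum.inl a', Sum.inr v) with hR
  have hsymm : ∀ u v, R u v → R v u := fun u v h a a' he => h a' a he.symm
  have hirr : ∀ u, ¬ R u u := fun u h => h 0 0 rfl
  have hDmem : ∀ p : Fin 3 × Fin 3, p.1 ≠ p.2 →
      p ∈ ({((0 : Fin 3), (1 : Fin 3)), (0, 2), (1, 0), (1, 2), (2, 0), (2, 1)} :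
        Finset (Fin 3 × Fin 3)) := by decide
  have hbound : ∀ u ∈ T, (T.filter (fun v => ¬ R u v)).card ≤ 7 := by
    intro u hu
    set D : Finset (Fin 3 × Fin 3) :=
      {((0 : Fin 3), (1 : Fin 3)), (0, 2), (1, 0), (1, 2), (2, 0), (2, 1)} with hDdef
    set g : Fin 3 × Fin 3 → Fin n := fun p =>
      if h : ∃ v : Fin n, ψ s(Sum.inl p.2, Sum.inr v) = ψ s(Sum.inl p.1, Sum.inr u)
      then h.choose else u with hgdef
    have hsub : T.filter (fun v => ¬ R u v) ⊆ insert u (D.image g) := by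
      intro v hv
      have hv' : ¬ R u v := (Finset.mem_filter.mp hv).2
      simp only [hR] at hv'
      push_neg at hv'
      obtain ⟨a, a', heq⟩ := hv'
      by_cases haa : a = a'
      · subst haa
        have huv : u = v := by
          by_contra h
          exact hcross u v a h heq
        exact Finset.mem_insert.mpr (Or.inl huv.symm)
      · refine Finset.mem_insert.mpr (Or.inr (Finset.mem_image.mpr ⟨(a, a'), hDmem _ haa, ?_⟩))
        have hex : ∃ w : Fin n, ψ s(Sum.inl a', Sum.inr w) = ψ s(Sum.inl a, Sum.inr u) :=
          ⟨v, heq.symm⟩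
        rw [hgdef]
        simp only [dif_pos hex]
        by_contra h
        exact hcross _ _ a' h (hex.choose_spec.trans heq)
    have hDcard : D.card = 6 := by decide
    calc (T.filter (fun v => ¬ R u v)).card
        ≤ (insert u (D.image g)).card := Finset.card_le_card hsub
      _ ≤ (D.image g).card + 1 := Finset.card_insert_le _ _
      _ ≤ D.card + 1 := by
          have := Finset.card_image_le (s := D) (f := g); omega
      _ ≤ 7 := by omega
  obtain ⟨S, hST, hpair, hScard⟩ := greedy_aux R hsymm hirr 7 T hbound
  have hGoodS : ∀ u ∈ S, Good u := fun u hu => (Finset.mem_filter.mp (hST hu)).2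
  refine ⟨S, ?_, fun u hu => hGoodS u hu, fun u hu u' hu' hne => hpair u hu u' hu' hne, ?_⟩
  · rw [div_le_iff₀ (by norm_num : (0 : ℚ) < 7)]
    have h1 : n ≤ 7 * S.card + 3 := by omega
    have h2 : (n : ℚ) ≤ 7 * S.card + 3 := by exact_mod_cast h1
    linarith
  · intro X hX _hX5 e he f hf hve hvf heq
    have hform : ∀ e ∈ B.edgeSet,
        (∀ v, v ∈ e → v ∈ (Set.range (Sum.inl : Fin 3 → Fin 3 ⊕ Fin n) ∪
            Sum.inr '' (X : Set (Fin n)))) →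
        (∃ a b : Fin 3, a ≠ b ∧ e = s(Sum.inl a, Sum.inl b)) ∨
        (∃ (a : Fin 3) (u : Fin n), u ∈ S ∧ e = s(Sum.inl a, Sum.inr u)) := by
      intro e
      induction e using Sym2.ind with
      | _ p q =>
        intro he hv
        rw [SimpleGraph.mem_edgeSet, hB] at he
        rcases he with ⟨a, b, hab, rfl, rfl⟩ | ⟨a, u, ⟨rfl, rfl⟩ | ⟨rfl, rfl⟩⟩
        · exact Or.inl ⟨a, b, hab, rfl⟩
        · have hmem := hv (Sum.inr u) (by simp)
          rcases hmem with ⟨x, hx⟩ | ⟨w, hwX, hwe⟩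
          · exact absurd hx (by simp)
          · have : w = u := by simpa using hwe
            subst this
            exact Or.inr ⟨a, w, hX (Finset.mem_coe.mp hwX), rfl⟩
        · have hmem := hv (Sum.inr u) (by simp)
          rcases hmem with ⟨x, hx⟩ | ⟨w, hwX, hwe⟩
          · exact absurd hx (by simp)
          · have : w = u := by simpa using hwe
            subst this
            exact Or.inr ⟨a, w, hX (Finset.mem_coe.mp hwX), Sym2.eq_swap⟩
    rcases hform e he hve with ⟨a, b, hab, rfl⟩ | ⟨a, u, huS, rfl⟩ <;>
      rcases hform f hf hvf with ⟨a', b', hab', rfl⟩ | ⟨a', u', hu'S, rfl⟩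
    · have hs := htri a b a' b' hab hab' heq
      have hmm : Sym2.map (Sum.inl : Fin 3 → Fin 3 ⊕ Fin n) s(a, b) =
          Sym2.map Sum.inl s(a', b') := by rw [hs]
      simpa [Sym2.map_pair_eq] using hmm
    · exact absurd heq.symm (hGoodS u' hu'S a' a b hab)
    · exact absurd heq (hGoodS u huS a a' b' hab')
    · by_cases huu : u = u'
      · subst huu
        by_cases haa : a = a'
        · subst haa; rfl
        · exfalso
          have h1 : ψ s(Sum.inr u, Sum.inl a) ≠ ψ s(Sum.inr u, Sum.inl a') :=
            hproper _ _ _ (adjrl u a) (adjrl u a') (by simp [haa])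
          apply h1
          rw [Sym2.eq_swap, heq, Sym2.eq_swap]
      · exact absurd heq (hpair u huS u' hu'S huu a a')
end

section
/- Let L ≅ K_{1,3}, R ≅ K_{1,4} and let J = K_{L,R} be the graph on V(L) ∪ V(R) with edge set E(L) ∪ E(R) together with all edges between V(L) and V(R). Then the maximum bipartition density m_{(2)}(J) := min over partitions V(J) = V_1 ∪ V_2 of max{ m_1(J[V_1]), m_1(J[V_2]) } equals 4/5. -/
/-! Splitting `J` into `V(L)` and `V(R)` leaves two stars, and a nonempty subgraph of a star on
`n ≤ 5` vertices has fewer edges than vertices, hence density at most `1 - 1/n ≤ 4/5`.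
Conversely, if one side of a bipartition holds `x` vertices of `L` and `y` of `R`, the cross
edges span a `K_{x,y}` of density `xy/(x+y)`. Unless a side contains all of `R` (and so the
star `K_{1,4}`), running through the possible pairs `(x, y)` shows that one side has
`xy/(x+y) ≥ 4/5`. -/

open Sum Set

namespace SimpleGraph

variable {V : Type*} {G : SimpleGraph V}

noncomputable def Subgraph.density (H : G.Subgraph) : ℚ := H.edgeSet.ncard / H.verts.ncard

def HasDenseSubgraphIn (G : SimpleGraph V) (W : Set V) (r : ℚ) : Prop :=
  ∃ H : G.Subgraph, H.verts ⊆ W ∧ H.verts.Nonempty ∧ r ≤ H.density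

section Star

variable (H : G.Subgraph)

lemma Subgraph.ncard_edgeSet_lt_ncard_verts_of_adj_eq (c : V)
    (hc : ∀ u v, H.Adj u v → u = c ∨ v = c)
    (hfin : H.verts.Finite) (hne : H.verts.Nonempty) :
    H.edgeSet.ncard < H.verts.ncard := by
  have hnbr : H.neighborSet c ⊆ H.verts := fun v hv => H.edge_vert (H.adj_symm hv)
  have hedges : H.edgeSet ⊆ (fun v => s(c, v)) '' H.neighborSet c := by
    intro e he
    induction e using Sym2.ind with
    | _ u v =>
      rcases hc u v he with rfl | rfl
      · exact ⟨v, he, rfl⟩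
      · exact ⟨u, H.adj_symm he, Sym2.eq_swap⟩
  have hnbr_ssub : H.neighborSet c ⊂ H.verts := by
    refine hnbr.ssubset_of_ne fun heq => ?_
    obtain ⟨v, hv⟩ := hne
    rw [← heq] at hv
    have hcc : c ∈ H.neighborSet c := heq ▸ H.edge_vert hv
    exact (H.adj_sub hcc).ne rfl
  calc H.edgeSet.ncard ≤ ((fun v => s(c, v)) '' H.neighborSet c).ncard :=
        ncard_le_ncard hedges ((hfin.subset hnbr).image _)
    _ ≤ (H.neighborSet c).ncard := ncard_image_le (hfin.subset hnbr)
    _ < H.verts.ncard := ncard_lt_ncard hnbr_ssub hfin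

lemma Subgraph.density_le_of_adj_eq (c : V) (hc : ∀ u v, H.Adj u v → u = c ∨ v = c)
    (hfin : H.verts.Finite) (hne : H.verts.Nonempty) {n : ℕ} (hn : H.verts.ncard ≤ n) :
    H.density ≤ 1 - (n : ℚ)⁻¹ := by
  have he : (H.edgeSet.ncard : ℚ) + 1 ≤ H.verts.ncard :=
    mod_cast H.ncard_edgeSet_lt_ncard_verts_of_adj_eq c hc hfin hne
  have hv : (0 : ℚ) < H.verts.ncard := mod_cast (ncard_pos hfin).2 hne
  calc H.density ≤ (H.verts.ncard - 1) / H.verts.ncard :=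
        div_le_div_of_nonneg_right (by linarith) hv.le
    _ = 1 - (H.verts.ncard : ℚ)⁻¹ := by field_simp
    _ ≤ 1 - (n : ℚ)⁻¹ := by gcongr

lemma Subgraph.density_le_of_verts_subset_range {α : Type*} [Finite α] {f : α → V}
    (hf : Function.Injective f) {a₀ : α} (hstar : ∀ a b, G.Adj (f a) (f b) → a = a₀ ∨ b = a₀)
    (hH : H.verts ⊆ range f) (hne : H.verts.Nonempty) :
    H.density ≤ 1 - (Nat.card α : ℚ)⁻¹ := by
  refine H.density_le_of_adj_eq (f a₀) (fun u v huv => ?_) ((toFinite (range f)).subset hH) hne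
    ((ncard_le_ncard hH).trans (ncard_range_of_injective hf).le)
  obtain ⟨a, rfl⟩ := hH (H.edge_vert huv)
  obtain ⟨b, rfl⟩ := hH (H.edge_vert huv.symm)
  exact (hstar a b (H.adj_sub huv)).imp (congrArg f) (congrArg f)

end Star

section CompleteBetween

variable (S T : Set V) (hST : ∀ s ∈ S, ∀ t ∈ T, G.Adj s t)

def Subgraph.completeBetween : G.Subgraph where
  verts := S ∪ T
  Adj u v := u ∈ S ∧ v ∈ T ∨ u ∈ T ∧ v ∈ S
  adj_sub := by
    rintro u v (⟨hu, hv⟩ | ⟨hu, hv⟩)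
    exacts [hST u hu v hv, (hST v hv u hu).symm]
  edge_vert := by
    rintro u v (⟨hu, -⟩ | ⟨hu, -⟩)
    exacts [Or.inl hu, Or.inr hu]
  symm := ⟨fun _ _ => by tauto⟩

include hST in
lemma disjoint_of_forall_adj : Disjoint S T :=
  Set.disjoint_left.2 fun v hvS hvT => (hST v hvS v hvT).ne rfl

lemma Subgraph.edgeSet_completeBetween :
    (Subgraph.completeBetween S T hST).edgeSet = (fun p : V × V => s(p.1, p.2)) '' S ×ˢ T := by
  ext e
  induction e using Sym2.ind with
  | _ u v =>
    simp only [Subgraph.mem_edgeSet, mem_image, mem_prod, Prod.exists, Sym2.eq_iff]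
    constructor
    · rintro (⟨hu, hv⟩ | ⟨hu, hv⟩)
      exacts [⟨u, v, ⟨hu, hv⟩, Or.inl ⟨rfl, rfl⟩⟩, ⟨v, u, ⟨hv, hu⟩, Or.inr ⟨rfl, rfl⟩⟩]
    · rintro ⟨a, b, ⟨ha, hb⟩, ⟨rfl, rfl⟩ | ⟨rfl, rfl⟩⟩
      exacts [Or.inl ⟨ha, hb⟩, Or.inr ⟨hb, ha⟩]

lemma Subgraph.density_completeBetween (hS : S.Finite) (hT : T.Finite) :
    (Subgraph.completeBetween S T hST).density = S.ncard * T.ncard / (S.ncard + T.ncard) := by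
  have hdisj := disjoint_of_forall_adj S T hST
  have hinj : InjOn (fun p : V × V => s(p.1, p.2)) (S ×ˢ T) := by
    rintro ⟨a, b⟩ ⟨ha, hb⟩ ⟨a', b'⟩ ⟨ha', hb'⟩ h
    rcases Sym2.eq_iff.1 h with ⟨rfl, rfl⟩ | ⟨rfl, rfl⟩
    · rfl
    · exact (hdisj.ne_of_mem ha hb' rfl).elim
  rw [Subgraph.density, Subgraph.edgeSet_completeBetween, hinj.ncard_image, ncard_prod]
  simp only [Subgraph.completeBetween, ncard_union_eq hdisj hS hT]
  push_cast
  rfl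

include hST in
lemma hasDenseSubgraphIn_of_completeBetween {W : Set V} (hSW : S ⊆ W) (hTW : T ⊆ W)
    (hS : S.Finite) (hT : T.Finite) (hSne : S.Nonempty) {r : ℚ}
    (hr : r ≤ S.ncard * T.ncard / (S.ncard + T.ncard)) :
    G.HasDenseSubgraphIn W r :=
  ⟨Subgraph.completeBetween S T hST, union_subset hSW hTW, hSne.mono subset_union_left,
    (Subgraph.density_completeBetween S T hST hS hT).symm ▸ hr⟩

end CompleteBetween

end SimpleGraph

open SimpleGraph

/-- `x`, `y` count the vertices of `L`, `R` on one side of a bipartition: either some side spans a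
`K_{x,y}` with `xy/(x+y) ≥ 4/5`, or some side contains all of `R`. -/
lemma four_five_split : ∀ x ≤ 4, ∀ y ≤ 5,
    (0 < x ∧ 4 * (x + y) ≤ 5 * x * y) ∨ y = 5 ∨
    (0 < 4 - x ∧ 4 * (4 - x + (5 - y)) ≤ 5 * (4 - x) * (5 - y)) ∨ 5 - y = 5 := by
  decide

section FourFive

variable {G : SimpleGraph (Fin 4 ⊕ Fin 5)} (hLR : ∀ a b, G.Adj (inl a) (inr b))
  (hRstar : ∀ b, b ≠ 0 → G.Adj (inr 0) (inr b))

include hLR in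
lemma hasDenseSubgraphIn_of_cross (U : Set (Fin 4 ⊕ Fin 5)) (hl : 0 < (range inl ∩ U).ncard)
    (hdense : 4 * ((range inl ∩ U).ncard + (range inr ∩ U).ncard) ≤
      5 * (range inl ∩ U).ncard * (range inr ∩ U).ncard) :
    G.HasDenseSubgraphIn U (4 / 5) := by
  refine hasDenseSubgraphIn_of_completeBetween (range inl ∩ U) (range inr ∩ U) ?_
    inter_subset_right inter_subset_right (toFinite _) (toFinite _) ((ncard_pos).1 hl) ?_
  · rintro _ ⟨⟨a, rfl⟩, -⟩ _ ⟨⟨b, rfl⟩, -⟩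
    exact hLR a b
  · have hq : (4 * ((range inl ∩ U).ncard + (range inr ∩ U).ncard) : ℚ) ≤
        5 * (range inl ∩ U).ncard * (range inr ∩ U).ncard := by exact_mod_cast hdense
    rw [div_le_div_iff₀ (by norm_num) (by positivity)]
    linarith

include hRstar in
lemma hasDenseSubgraphIn_of_ncard_eq_five (U : Set (Fin 4 ⊕ Fin 5))
    (hU : (range inr ∩ U).ncard = 5) : G.HasDenseSubgraphIn U (4 / 5) := by
  have hcard : (range (inr : Fin 5 → Fin 4 ⊕ Fin 5)).ncard = 5 := by
    simp [ncard_range_of_injective inr_injective]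
  have hsub : range inr ⊆ U := by
    rw [← eq_of_subset_of_ncard_le inter_subset_left (hcard.trans hU.symm).le]
    exact inter_subset_right
  refine hasDenseSubgraphIn_of_completeBetween {inr 0} (range inr \ {inr 0}) ?_
    (singleton_subset_iff.2 (hsub ⟨0, rfl⟩)) (sdiff_subset.trans hsub) (toFinite _) (toFinite _)
    (singleton_nonempty _) ?_
  · rintro _ rfl _ ⟨⟨b, rfl⟩, hb⟩
    exact hRstar b (by rintro rfl; exact hb rfl)
  · rw [ncard_singleton, ncard_sdiff_singleton_of_mem (mem_range_self 0), hcard]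
    norm_num

include hLR hRstar in
lemma hasDenseSubgraphIn_or_compl (W : Set (Fin 4 ⊕ Fin 5)) :
    G.HasDenseSubgraphIn W (4 / 5) ∨ G.HasDenseSubgraphIn Wᶜ (4 / 5) := by
  have hcardL : (range inl ∩ W).ncard + (range inl ∩ Wᶜ).ncard = 4 := by
    rw [← sdiff_eq, ncard_inter_add_ncard_sdiff_eq_ncard, ncard_range_of_injective inl_injective,
      Nat.card_fin]
  have hcardR : (range inr ∩ W).ncard + (range inr ∩ Wᶜ).ncard = 5 := by
    rw [← sdiff_eq, ncard_inter_add_ncard_sdiff_eq_ncard, ncard_range_of_injective inr_injective,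
      Nat.card_fin]
  have hLc : (range inl ∩ Wᶜ).ncard = 4 - (range inl ∩ W).ncard := by omega
  have hRc : (range inr ∩ Wᶜ).ncard = 5 - (range inr ∩ W).ncard := by omega
  rcases four_five_split (range inl ∩ W).ncard (by omega) (range inr ∩ W).ncard (by omega) with
    ⟨hpos, hdense⟩ | hspan | ⟨hpos, hdense⟩ | hspan
  · exact .inl (hasDenseSubgraphIn_of_cross hLR W hpos hdense)
  · exact .inl (hasDenseSubgraphIn_of_ncard_eq_five hRstar W hspan)
  · exact .inr (hasDenseSubgraphIn_of_cross hLR Wᶜ (by omega) (by rwa [hLc, hRc]))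
  · exact .inr (hasDenseSubgraphIn_of_ncard_eq_five hRstar Wᶜ (by omega))

end FourFive

/-- Let `J = K_{L,R}` with `L ≅ K_{1,3}` (on `Fin 4`, centre `0`) and
`R ≅ K_{1,4}` (on `Fin 5`, centre `0`): edges of the two stars plus all cross edges.
Then the maximum bipartition density `m_{(2)}(J) = min over partitions (V₁, V₁ᶜ) of
max{m₁(J[V₁]), m₁(J[V₁ᶜ])}` equals `4/5`: some partition has all nonempty subgraphs on
one side of density at most `4/5`, and every partition admits a nonempty subgraph on
one side of density at least `4/5`. -/
theorem stmt_14 (J : SimpleGraph (Fin 4 ⊕ Fin 5))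
    (hJ : ∀ u v, J.Adj u v ↔
      ((∃ a b : Fin 4, a ≠ b ∧ (a = 0 ∨ b = 0) ∧ u = Sum.inl a ∧ v = Sum.inl b) ∨
       (∃ a b : Fin 5, a ≠ b ∧ (a = 0 ∨ b = 0) ∧ u = Sum.inr a ∧ v = Sum.inr b) ∨
       (∃ (a : Fin 4) (b : Fin 5),
          (u = Sum.inl a ∧ v = Sum.inr b) ∨ (u = Sum.inr b ∧ v = Sum.inl a)))) :
    (∃ V₁ : Set (Fin 4 ⊕ Fin 5), ∀ H' : J.Subgraph,
        (H'.verts ⊆ V₁ ∨ H'.verts ⊆ V₁ᶜ) → H'.verts.Nonempty →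
        (H'.edgeSet.ncard : ℚ) / (H'.verts.ncard : ℚ) ≤ 4 / 5) ∧
    (∀ V₁ : Set (Fin 4 ⊕ Fin 5), ∃ H' : J.Subgraph,
        (H'.verts ⊆ V₁ ∨ H'.verts ⊆ V₁ᶜ) ∧ H'.verts.Nonempty ∧
        4 / 5 ≤ (H'.edgeSet.ncard : ℚ) / (H'.verts.ncard : ℚ)) := by
  have hLL : ∀ a b, J.Adj (inl a) (inl b) → a = 0 ∨ b = 0 := fun a b h =>
    (by simpa using (hJ _ _).1 h : a ≠ b ∧ (a = 0 ∨ b = 0)).2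
  have hRR : ∀ a b, J.Adj (inr a) (inr b) → a = 0 ∨ b = 0 := fun a b h =>
    (by simpa using (hJ _ _).1 h : a ≠ b ∧ (a = 0 ∨ b = 0)).2
  have hLR : ∀ a b, J.Adj (inl a) (inr b) := fun a b => by simp [hJ]
  have hRstar : ∀ b, b ≠ 0 → J.Adj (inr 0) (inr b) := fun b hb => by simp [hJ, hb.symm]
  refine ⟨⟨range inl, fun H hside hne => ?_⟩, fun W => ?_⟩
  · rw [compl_range_inl] at hside
    rcases hside with hsub | hsub
    · refine (H.density_le_of_verts_subset_range inl_injective hLL hsub hne).trans ?_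
      norm_num
    · refine (H.density_le_of_verts_subset_range inr_injective hRR hsub hne).trans ?_
      norm_num
  · rcases hasDenseSubgraphIn_or_compl hLR hRstar W with
      ⟨H, hsub, hne, hH⟩ | ⟨H, hsub, hne, hH⟩
    exacts [⟨H, .inl hsub, hne, hH⟩, ⟨H, .inr hsub, hne, hH⟩]
end

section
/- Let n ≥ 2ℓ+1 and let G be a graph on vertex set {x, y} ∪ U_1 ∪ W_2 ∪ U_2 ∪ ⋯ ∪ U_{ℓ−1} ∪ W_ℓ ∪ U_ℓ, where the listed sets are pairwise disjoint and each of the sets U_i, W_i has size at least m. Suppose: (i) xy ∈ E(G); (ii) every vertex of U_1 is adjacent to x and every vertex of U_ℓ is adjacent to y; (iii) for 2 ≤ i ≤ ℓ, every vertex of W_i has at least m/2 neighbours in U_{i−1}, and every vertex of U_i has at least m/2 neighbours in W_i. If m > 14(2ℓ+1), then for every proper edge-colouring ψ of G there exists a rainbow cycle of length 2ℓ+1 through the edge xy. -/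
/-! Build the path `x, y, u_ℓ, w_ℓ, u_{ℓ-1}, …, w_2, u_1` greedily, one layer at a time, and close
it with the edge `u_1 x`. At each step the new vertex must avoid the at most `2ℓ + 1` vertices
and colours already used; since the colouring is proper, each used colour appears on at most one
edge from the current endpoint (and, at the last step, from `x`), so at most `3 (2ℓ + 1)` of the
`≥ m / 2` candidates are excluded. -/

namespace Set

lemma ncard_inter_preimage_list_le {V C : Type*} {S : Set V} {f : V → C} (hf : InjOn f S)
    (cs : List C) : (S ∩ f ⁻¹' {c | c ∈ cs}).ncard ≤ cs.length := by
  classical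
  calc (S ∩ f ⁻¹' {c | c ∈ cs}).ncard ≤ (cs.toFinset : Set C).ncard :=
        ncard_le_ncard_of_injOn f (fun v hv => by simpa using hv.2) (hf.mono inter_subset_left)
    _ ≤ cs.length := by rw [ncard_coe_finset]; exact cs.toFinset_card_le

lemma exists_mem_notMem_of_injOn {V C : Type*} {S : Set V} {f g : V → C}
    (hf : InjOn f S) (hg : InjOn g S) (vs : List V) (cs : List C)
    (h : vs.length + 2 * cs.length < S.ncard) : ∃ v ∈ S, v ∉ vs ∧ f v ∉ cs ∧ g v ∉ cs := by
  by_contra! hbad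
  have hcover : S ⊆ {v | v ∈ vs} ∪ (S ∩ f ⁻¹' {c | c ∈ cs}) ∪ (S ∩ g ⁻¹' {c | c ∈ cs}) := by
    intro v hv
    by_cases hvs : v ∈ vs
    · exact Or.inl (Or.inl hvs)
    by_cases hfv : f v ∈ cs
    · exact Or.inl (Or.inr ⟨hv, hfv⟩)
    · exact Or.inr ⟨hv, hbad v hv hvs hfv⟩
  have hfin : S.Finite := finite_of_ncard_pos (by omega)
  have hvs : {v | v ∈ vs}.ncard ≤ vs.length := by
    classical
    rw [← List.coe_toFinset, ncard_coe_finset]; exact vs.toFinset_card_le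
  have h₁ := ncard_le_ncard hcover
    ((vs.finite_toSet.union (hfin.inter_of_left _)).union (hfin.inter_of_left _))
  have h₂ := ncard_union_le ({v | v ∈ vs} ∪ (S ∩ f ⁻¹' {c | c ∈ cs})) (S ∩ g ⁻¹' {c | c ∈ cs})
  have h₃ := ncard_union_le {v | v ∈ vs} (S ∩ f ⁻¹' {c | c ∈ cs})
  have h₄ := ncard_inter_preimage_list_le hf cs
  have h₅ := ncard_inter_preimage_list_le hg cs
  omega

end Set

namespace SimpleGraph

variable {V C : Type*} {G : SimpleGraph V} {ψ : Sym2 V → C}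

def IsProperEdgeColoring (G : SimpleGraph V) (ψ : Sym2 V → C) : Prop :=
  ∀ a b c, G.Adj a b → G.Adj a c → b ≠ c → ψ s(a, b) ≠ ψ s(a, c)

def Walk.IsRainbow {u v : V} (p : G.Walk u v) (ψ : Sym2 V → C) : Prop :=
  (p.edges.map ψ).Nodup

lemma IsProperEdgeColoring.injOn (hψ : G.IsProperEdgeColoring ψ) {a : V} {S : Set V}
    (hS : ∀ v ∈ S, G.Adj a v) : Set.InjOn (fun v => ψ s(a, v)) S := fun _ hb _ hc hbc =>
  by_contra fun hne => hψ a _ _ (hS _ hb) (hS _ hc) hne hbc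

lemma Walk.IsRainbow.concat {u v w : V} {p : G.Walk u v} (hp : p.IsRainbow ψ) (h : G.Adj v w)
    (hw : ψ s(v, w) ∉ p.edges.map ψ) : (p.concat h).IsRainbow ψ := by
  rw [Walk.IsRainbow, Walk.edges_concat, List.map_concat]
  exact List.Nodup.concat hw hp

lemma Walk.IsPath.ne_of_length_pos {u v : V} {p : G.Walk u v} (hp : p.IsPath)
    (hlen : 0 < p.length) : u ≠ v := by
  rintro rfl
  exact not_nil_iff_lt_length.2 hlen (isPath_iff_nil.1 hp)

lemma IsProperEdgeColoring.exists_concat (hψ : G.IsProperEdgeColoring ψ) {a u : V}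
    {p : G.Walk a u} (hp : p.IsPath) (hr : p.IsRainbow ψ) (hlen : 0 < p.length) {S : Set V}
    (hS : ∀ v ∈ S, G.Adj u v) (hcard : 3 * p.length + 1 < S.ncard) :
    ∃ v ∈ S, ∃ h : G.Adj u v, (p.concat h).IsPath ∧ (p.concat h).IsRainbow ψ ∧
      ((∀ v ∈ S, G.Adj a v) → ψ s(a, v) ∉ (p.concat h).edges.map ψ) := by
  obtain ⟨c, hcS, hca⟩ : ∃ c, (∀ v ∈ S, G.Adj c v) ∧ ((∀ v ∈ S, G.Adj a v) → c = a) := by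
    by_cases haS : ∀ v ∈ S, G.Adj a v
    exacts [⟨a, haS, fun _ => rfl⟩, ⟨u, hS, fun h => absurd h haS⟩]
  obtain ⟨v, hvS, hvp, hvu, hvc⟩ := Set.exists_mem_notMem_of_injOn (hψ.injOn hS) (hψ.injOn hcS)
    p.support (p.edges.map ψ) (by simpa [Walk.length_support] using by omega)
  refine ⟨v, hvS, hS v hvS, hp.concat hvp _, hr.concat _ hvu, fun haS => ?_⟩
  obtain rfl := (hca haS).symm
  have hau : ψ s(v, a) ≠ ψ s(v, u) :=
    hψ v a u (haS v hvS).symm (hS v hvS).symm (hp.ne_of_length_pos hlen)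
  rw [Walk.edges_concat, List.map_concat, List.concat_eq_append, List.mem_append, not_or]
  exact ⟨hvc, by simpa [Sym2.eq_swap] using hau⟩

lemma Walk.IsPath.isCycle_cons_reverse {x u : V} {p : G.Walk x u} (hp : p.IsPath)
    (hr : p.IsRainbow ψ) (h : G.Adj x u) (hx : ψ s(x, u) ∉ p.edges.map ψ) :
    (Walk.cons h p.reverse).IsCycle ∧ (Walk.cons h p.reverse).IsRainbow ψ := by
  refine ⟨(Walk.cons_isCycle_iff _ h).2 ⟨hp.reverse, ?_⟩, ?_⟩
  · rw [Walk.edges_reverse, List.mem_reverse]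
    exact fun he => hx (List.mem_map_of_mem he)
  · rw [Walk.IsRainbow, Walk.edges_cons, Walk.edges_reverse, List.map_cons, List.map_reverse,
      List.nodup_cons, List.mem_reverse, List.nodup_reverse]
    exact ⟨hx, hr⟩

/-- The last clause matters only for `ℓ - k = 1`, where the layer is `U 1 ⊆ N(x)`: it lets the
path be closed through `x`. -/
lemma IsProperEdgeColoring.exists_rainbow_path_through_layers (hψ : G.IsProperEdgeColoring ψ)
    {x y : V} (U W : ℕ → Set V) {ℓ m : ℕ} (hl : 1 ≤ ℓ) (hm : 12 * ℓ < m)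
    (hUℓ : m ≤ (U ℓ).ncard) (hedge : G.Adj x y) (hUl : ∀ u ∈ U ℓ, G.Adj y u)
    (hWdeg : ∀ i, 2 ≤ i → i ≤ ℓ → ∀ w ∈ W i, m ≤ 2 * {u ∈ U (i - 1) | G.Adj w u}.ncard)
    (hUdeg : ∀ i, 2 ≤ i → i ≤ ℓ → ∀ u ∈ U i, m ≤ 2 * {w ∈ W i | G.Adj u w}.ncard) :
    ∀ k < ℓ, ∃ u ∈ U (ℓ - k), ∃ p : G.Walk x u, p.IsPath ∧ p.IsRainbow ψ ∧
      p.length = 2 * k + 2 ∧ s(x, y) ∈ p.edges ∧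
      ((∀ v ∈ U (ℓ - k), G.Adj x v) → ψ s(x, u) ∉ p.edges.map ψ) := by
  intro k hk
  induction k with
  | zero =>
    have hp : (Walk.cons hedge Walk.nil).IsPath := by simp [hedge.ne]
    have hr : (Walk.cons hedge Walk.nil).IsRainbow ψ := by simp [Walk.IsRainbow]
    obtain ⟨u, hu, _, hp', hr', hfresh⟩ :=
      hψ.exists_concat hp hr (by simp) hUl (by simp; omega)
    exact ⟨u, hu, _, hp', hr', by simp, by simp, hfresh⟩
  | succ k ih =>
    obtain ⟨u, hu, p, hp, hr, hlen, hxy, -⟩ := ih (by omega)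
    have hi : ℓ - (k + 1) = ℓ - k - 1 := by omega
    obtain ⟨w, hw, huw, hp₁, hr₁, -⟩ := hψ.exists_concat hp hr (by omega)
      (S := {w ∈ W (ℓ - k) | G.Adj u w}) (fun _ h => h.2)
      (by have := hUdeg (ℓ - k) (by omega) (by omega) u hu; omega)
    obtain ⟨u', hu', hwu', hp₂, hr₂, hfresh⟩ := hψ.exists_concat hp₁ hr₁ (by simp)
      (S := {u' ∈ U (ℓ - k - 1) | G.Adj w u'}) (fun _ h => h.2)
      (by have := hWdeg (ℓ - k) (by omega) (by omega) w hw.1; simp; omega)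
    refine ⟨u', hi ▸ hu'.1, _, hp₂, hr₂, by simp [hlen]; omega, by simp [hxy], fun hx => ?_⟩
    exact hfresh fun v hv => hx v (hi ▸ hv.1)

end SimpleGraph

theorem stmt_17_general {V : Type} (ℓ m : ℕ) (hl : 1 ≤ ℓ)
    (hm : 14 * (2 * ℓ + 1) < m)
    (G : SimpleGraph V) (x y : V)
    (U Wst : ℕ → Set V)
    (hUsize : ∀ i, 1 ≤ i → i ≤ ℓ → m ≤ (U i).ncard)
    (hedge : G.Adj x y)
    (hU1 : ∀ u ∈ U 1, G.Adj x u)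
    (hUl : ∀ u ∈ U ℓ, G.Adj y u)
    (hWdeg : ∀ i, 2 ≤ i → i ≤ ℓ → ∀ w ∈ Wst i,
      m ≤ 2 * {u ∈ U (i - 1) | G.Adj w u}.ncard)
    (hUdeg : ∀ i, 2 ≤ i → i ≤ ℓ → ∀ u ∈ U i,
      m ≤ 2 * {w ∈ Wst i | G.Adj u w}.ncard)
    (Col : Type) (ψ : Sym2 V → Col)
    (hproper : ∀ a b c, G.Adj a b → G.Adj a c → b ≠ c → ψ s(a, b) ≠ ψ s(a, c)) :
    ∃ w : G.Walk x x, w.IsCycle ∧ w.length = 2 * ℓ + 1 ∧ s(x, y) ∈ w.edges ∧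
      (w.edges.map ψ).Nodup := by
  have hψ : G.IsProperEdgeColoring ψ := hproper
  obtain ⟨u, hu, p, hp, hr, hlen, hxyp, hfresh⟩ :=
    hψ.exists_rainbow_path_through_layers U Wst hl (by omega) (hUsize ℓ hl le_rfl) hedge hUl
      hWdeg hUdeg (ℓ - 1) (by omega)
  rw [show ℓ - (ℓ - 1) = 1 by omega] at hu hfresh
  obtain ⟨hcycle, hrainbow⟩ := hp.isCycle_cons_reverse hr (hU1 u hu) (hfresh hU1)
  refine ⟨_, hcycle, by simp [hlen]; omega, ?_, hrainbow⟩
  simpa [SimpleGraph.Walk.edges_cons, SimpleGraph.Walk.edges_reverse] using Or.inr hxyp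

/-- The layered cylinder structure (vertex set
`{x, y} ∪ U 1 ∪ W 2 ∪ U 2 ∪ ⋯ ∪ W ℓ ∪ U ℓ`, pairwise disjoint sets of size at least
`m`, with `xy ∈ E(G)`, `U 1 ⊆ N(x)`, `U ℓ ⊆ N(y)` and min-degree `m/2` between
consecutive layers) guarantees, when `m > 14(2ℓ+1)`, that every proper edge-colouring
admits a rainbow cycle of length `2ℓ+1` through the edge `xy`. -/
theorem stmt_17 {V : Type} (ℓ m : ℕ) (hl : 1 ≤ ℓ)
    (hm : 14 * (2 * ℓ + 1) < m)
    (G : SimpleGraph V) (x y : V)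
    (U Wst : ℕ → Set V)
    (hxy : x ≠ y)
    (hcover : ∀ v : V, v = x ∨ v = y ∨ (∃ i, 1 ≤ i ∧ i ≤ ℓ ∧ v ∈ U i) ∨
      (∃ i, 2 ≤ i ∧ i ≤ ℓ ∧ v ∈ Wst i))
    (hxyU : ∀ i, 1 ≤ i → i ≤ ℓ → x ∉ U i ∧ y ∉ U i)
    (hxyW : ∀ i, 2 ≤ i → i ≤ ℓ → x ∉ Wst i ∧ y ∉ Wst i)
    (hUdisj : ∀ i j, 1 ≤ i → i ≤ ℓ → 1 ≤ j → j ≤ ℓ → i ≠ j → Disjoint (U i) (U j))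
    (hWdisj : ∀ i j, 2 ≤ i → i ≤ ℓ → 2 ≤ j → j ≤ ℓ → i ≠ j →
      Disjoint (Wst i) (Wst j))
    (hUW : ∀ i j, 1 ≤ i → i ≤ ℓ → 2 ≤ j → j ≤ ℓ → Disjoint (U i) (Wst j))
    (hUsize : ∀ i, 1 ≤ i → i ≤ ℓ → m ≤ (U i).ncard)
    (hWsize : ∀ i, 2 ≤ i → i ≤ ℓ → m ≤ (Wst i).ncard)
    (hedge : G.Adj x y)
    (hU1 : ∀ u ∈ U 1, G.Adj x u)
    (hUl : ∀ u ∈ U ℓ, G.Adj y u)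
    (hWdeg : ∀ i, 2 ≤ i → i ≤ ℓ → ∀ w ∈ Wst i,
      m ≤ 2 * {u ∈ U (i - 1) | G.Adj w u}.ncard)
    (hUdeg : ∀ i, 2 ≤ i → i ≤ ℓ → ∀ u ∈ U i,
      m ≤ 2 * {w ∈ Wst i | G.Adj u w}.ncard)
    (Col : Type) (ψ : Sym2 V → Col)
    (hproper : ∀ a b c, G.Adj a b → G.Adj a c → b ≠ c → ψ s(a, b) ≠ ψ s(a, c)) :
    ∃ w : G.Walk x x, w.IsCycle ∧ w.length = 2 * ℓ + 1 ∧ s(x, y) ∈ w.edges ∧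
      (w.edges.map ψ).Nodup :=
  stmt_17_general ℓ m hl hm G x y U Wst hUsize hedge hU1 hUl hWdeg hUdeg Col ψ hproper
end
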